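/- arXiv:2012.14741 — 5 statements merged into one kernel-verified Lean document; each statement's English description precedes it below -/
import Mathlib

section
/- Let n ≥ 1 and let A : (Fin n)³ → ℂ, written A^k_{ij}, be a 2-jet array of quadric type. Then there exists a vector a ∈ ℂⁿ such that A^k_{ij} = −a_k δ_{ij} + a_i δ_{jk} + a_j δ_{ik} for all i, j, k (δ denoting the Kronecker delta). Equivalently, every 2-jet of a global holomorphic vector field on Qⁿ vanishing to second order at the reference point can be written as Z = ∑_{j=1}^n a_j (D ⊗ ∂/∂z_j + dz^j ⊙ B), where D = −∑_s (dz^s)² and B = 2∑_s dz^s ⊗ ∂/∂z_s. -/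
open Matrix

/-- Every 2-jet array of quadric type (`A k i j` denotes `A^k_{ij}`) has the form
`A^k_{ij} = −a_k δ_{ij} + a_i δ_{jk} + a_j δ_{ik}` for some vector `a ∈ ℂⁿ`;
equivalently every 2-jet of a global holomorphic vector field on `Qⁿ` vanishing to
second order at the reference point is `∑ⱼ aⱼ (D ⊗ ∂/∂zⱼ + dzʲ ⊙ B)`. -/
theorem stmt2 (n : ℕ) (hn : 1 ≤ n) (A : Fin n → Fin n → Fin n → ℂ)
    (hsym : ∀ k i j : Fin n, A k i j = A k j i)
    (hquad : ∀ i : Fin n, ∃ c : ℂ,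
      Matrix.of (fun k j => A k i j) + (Matrix.of (fun k j => A k i j))ᵀ
        = c • (1 : Matrix (Fin n) (Fin n) ℂ)) :
    ∃ a : Fin n → ℂ, ∀ i j k : Fin n,
      A k i j = -(a k) * (if i = j then 1 else 0)
        + a i * (if j = k then 1 else 0) + a j * (if i = k then 1 else 0) := by
  have key : ∀ i k j : Fin n, A k i j + A j i k = 2 * A i i i * (if k = j then 1 else 0) := by
    intro i k j
    obtain ⟨c, h⟩ := hquad i
    by_cases hkj : k = j
    · subst hkj
      have h' := Matrix.ext_iff.2 h k k
      have hii := Matrix.ext_iff.2 h i i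
      simp [Matrix.one_apply] at h' hii
      simp only [eq_self_iff_true, if_true, mul_one]
      linear_combination h' - hii
    · have h' := Matrix.ext_iff.2 h k j
      simp [Matrix.one_apply, hkj] at h'
      simp only [if_neg hkj, mul_zero]
      linear_combination h'
  have fact1 : ∀ i j : Fin n, A j i j = A i i i := by
    intro i j
    have h := key i j j
    simp only [eq_self_iff_true, if_true, mul_one] at h
    linear_combination h / 2
  have fact2 : ∀ i k j : Fin n, k ≠ j → A k i j = -A j i k := by
    intro i k j hkj
    have h := key i k j
    simp only [if_neg hkj, mul_zero] at h
    linear_combination h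
  refine ⟨fun i => A i i i, fun i j k => ?_⟩
  by_cases hij : i = j
  · by_cases hik : i = k
    · rw [← hij, ← hik]
      simp only [eq_self_iff_true, if_true, mul_one]
      ring
    · have hki : k ≠ i := fun h => hik h.symm
      have h1 : A k i i = -A i i k := fact2 i k i hki
      have h2 : A i i k = A i k i := hsym i i k
      have h3 : A i k i = A k k k := fact1 k i
      have hjk : ¬ j = k := fun h => hik (hij.trans h)
      rw [← hij]
      simp only [eq_self_iff_true, if_true, if_neg hik, if_neg hjk, mul_one, mul_zero]
      linear_combination h1 - h2 - h3
  · by_cases hjk : j = k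
    · have h := fact1 i j
      rw [hjk] at h
      simp only [if_neg hij, if_pos hjk, if_neg (hjk ▸ hij : ¬ i = k), mul_one, mul_zero]
      rw [hjk]
      linear_combination h
    · by_cases hik : i = k
      · have h2 : A k i j = A k j i := hsym k i j
        have h3 : A k j k = A j j j := fact1 j k
        rw [← hik] at h3
        simp only [if_neg hij, if_neg hjk, if_pos hik, mul_one, mul_zero]
        rw [← hik] at h2 ⊢
        linear_combination h2 + h3
      · have c1 : A k i j = -A j i k := fact2 i k j (fun h => hjk h.symm)
        have c2 : A j i k = A j k i := hsym j i k
        have c3 : A j k i = -A i k j := fact2 k j i (fun h => hij h.symm)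
        have c4 : A i k j = A i j k := hsym i k j
        have c5 : A i j k = -A k j i := fact2 j i k hik
        have c6 : A k j i = A k i j := hsym k j i
        simp only [if_neg hij, if_neg hjk, if_neg hik, mul_zero]
        linear_combination (c1 - c2 - c3 + c4 + c5 - c6) / 2
end

section
/- Let V ⊆ ℂⁿ be a complex linear subspace with dim V = m, and let k be the rank of the standard bilinear form ⟨·,·⟩ restricted to V. Then 2m − k ≤ n, and there exists g ∈ O(n,ℂ) such that g(V) = span_ℂ{e₁, …, e_k, e_{k+1} + i·e_{m+1}, …, e_m + i·e_{2m−k}}, where e₁, …, e_n is the standard basis of ℂⁿ and i = √−1 (when k = m this span is just span{e₁, …, e_m}). -/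
/-!
Write `V = U ⊕ R` with `R = V ∩ V^⊥` the radical. The form is nondegenerate on `U`, so `U` has
an orthonormal basis `u`, while a basis `w` of `R` is totally isotropic and orthogonal to `U`.
Nondegeneracy of the form on `ℂⁿ` provides isotropic `z` orthogonal to `u` with
`⟨w_i, z_j⟩ = δ_ij`, and then `a_j = w_j / 2 + z_j`, `b_j = i (z_j - w_j / 2)` are orthonormal
with `w_j = a_j + i b_j`. The orthonormal family `u, a, b` of size `k + 2 (m - k)` (whence
`2m - k ≤ n`) extends to an orthonormal basis of `ℂⁿ`, and `g` sends it to the standard basis.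
-/

noncomputable section

/-- The standard symmetric bilinear form `⟨x,y⟩ = ∑ₛ xₛ yₛ` on `ℂⁿ`. -/
def sbilin {n : ℕ} (x y : Fin n → ℂ) : ℂ := ∑ s, x s * y s

/-- The annihilator `V^⊥ = {w : ⟨v,w⟩ = 0 ∀ v ∈ V}` with respect to `sbilin`. -/
def perp (n : ℕ) (V : Submodule ℂ (Fin n → ℂ)) : Submodule ℂ (Fin n → ℂ) where
  carrier := {w | ∀ v ∈ V, sbilin v w = 0}
  zero_mem' := by intro v hv; simp [sbilin]
  add_mem' := by
    intro a b ha hb v hv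
    have h1 := ha v hv
    have h2 := hb v hv
    simp only [sbilin, Pi.add_apply, mul_add, Finset.sum_add_distrib] at *
    simp [h1, h2]
  smul_mem' := by
    intro c a ha v hv
    have h := ha v hv
    simp only [sbilin, Pi.smul_apply, smul_eq_mul] at *
    calc ∑ s, v s * (c * a s) = c * ∑ s, v s * a s := by
          rw [Finset.mul_sum]; exact Finset.sum_congr rfl fun s _ => by ring
      _ = 0 := by rw [h, mul_zero]

/-- The `j`-th standard basis vector of `ℂⁿ` (1-indexed: `stdVec n 1, …, stdVec n n`). -/
def stdVec (n : ℕ) (j : ℕ) : Fin n → ℂ := fun s => if (s : ℕ) + 1 = j then 1 else 0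

open Matrix Module Set Submodule

section

variable {K : Type*} [Field K] {n : ℕ}

def DotOrthonormal {ι : Type*} [DecidableEq ι] (v : ι → Fin n → K) : Prop :=
  ∀ i j, v i ⬝ᵥ v j = if i = j then 1 else 0

theorem DotOrthonormal.linearIndependent {ι : Type*} [Fintype ι] [DecidableEq ι]
    {v : ι → Fin n → K} (hv : DotOrthonormal v) : LinearIndependent K v := by
  rw [Fintype.linearIndependent_iff]
  intro c hc j
  simpa [dotProduct_sum, dotProduct_smul, hv j] using congr_arg (v j ⬝ᵥ ·) hc

theorem DotOrthonormal.append {p q : ℕ} {u : Fin p → Fin n → K} {v : Fin q → Fin n → K}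
    (hu : DotOrthonormal u) (hv : DotOrthonormal v) (huv : ∀ i j, u i ⬝ᵥ v j = 0) :
    DotOrthonormal (Fin.append u v) := by
  intro i j
  cases i using Fin.addCases <;> cases j using Fin.addCases <;>
    simp [hu _ _, hv _ _, huv, dotProduct_comm (v _) (u _), Fin.ext_iff] <;> omega

theorem Fin.range_append {α : Type*} {p q : ℕ} (u : Fin p → α) (v : Fin q → α) :
    range (Fin.append u v) = range u ∪ range v := by
  ext x
  constructor
  · rintro ⟨i, rfl⟩
    cases i using Fin.addCases <;> simp
  · rintro (⟨i, rfl⟩ | ⟨i, rfl⟩)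
    exacts [⟨_, Fin.append_left u v i⟩, ⟨_, Fin.append_right u v i⟩]

theorem LinearIndependent.exists_dotProduct_eq {ι : Type*} [Fintype ι] {y : ι → Fin n → K}
    (hy : LinearIndependent K y) (c : ι → K) : ∃ z, ∀ i, y i ⬝ᵥ z = c i := by
  have hrank : (Matrix.of y).rank = Fintype.card ι := by
    rw [rank_eq_finrank_span_row]
    exact finrank_span_eq_card hy
  have hsurj : LinearMap.range (Matrix.of y).mulVecLin = ⊤ :=
    eq_top_of_finrank_eq (by rw [finrank_fintype_fun_eq_card]; exact hrank)
  obtain ⟨z, hz⟩ := LinearMap.range_eq_top.mp hsurj c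
  exact ⟨z, congr_fun hz⟩

theorem exists_dotOrthonormal_basis [IsAlgClosed K] [Invertible (2 : K)]
    {S : Submodule K (Fin n → K)} {q : ℕ} (hq : finrank K S = q)
    (hS : ∀ x ∈ S, (∀ y ∈ S, x ⬝ᵥ y = 0) → x = 0) :
    ∃ v : Fin q → Fin n → K, DotOrthonormal v ∧ span K (range v) = S := by
  subst hq
  set B := LinearMap.BilinForm.restrict (dotProductBilin K K) S
  have hsymm : LinearMap.IsSymm B := ⟨fun x y => dotProduct_comm (x : Fin n → K) y⟩
  have hB : B.Nondegenerate := hsymm.isRefl.nondegenerate_iff_separatingLeft.mpr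
    fun x hx => Subtype.ext (hS x x.2 fun y hy => hx ⟨y, hy⟩)
  obtain ⟨b, hb⟩ := LinearMap.BilinForm.exists_orthogonal_basis hsymm
  choose c hc using fun i => IsAlgClosed.exists_eq_mul_self (B (b i) (b i))
  have hc0 : ∀ i, c i ≠ 0 := fun i h =>
    LinearMap.BilinForm.iIsOrtho.not_isOrtho_basis_self_of_nondegenerate hb hB i (by simp [hc i, h])
  set v : Fin (finrank K S) → Fin n → K := fun i => (c i)⁻¹ • (b i : Fin n → K)
  have hv : DotOrthonormal v := fun i j => by
    simp only [v, smul_dotProduct, dotProduct_smul, smul_eq_mul]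
    split_ifs with hij
    · subst hij
      rw [show (b i : Fin n → K) ⬝ᵥ b i = c i * c i from hc i]
      field_simp [hc0 i]
    · rw [show (b i : Fin n → K) ⬝ᵥ b j = 0 from hb hij, mul_zero, mul_zero]
  refine ⟨v, hv, eq_of_le_of_finrank_eq ?_ ?_⟩
  · exact span_le.mpr (range_subset_iff.mpr fun i => S.smul_mem _ (b _).2)
  · rw [finrank_span_eq_card hv.linearIndependent, Fintype.card_fin]

theorem DotOrthonormal.exists_extension [IsAlgClosed K] [Invertible (2 : K)] {p : ℕ}
    {v : Fin p → Fin n → K} (hv : DotOrthonormal v) :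
    ∃ (hpn : p ≤ n) (f : Fin n → Fin n → K), DotOrthonormal f ∧
      ∀ i, f (Fin.castLE hpn i) = v i := by
  set L := (Matrix.of v).mulVecLin
  set Z := LinearMap.ker L
  have hZ : ∀ x, x ∈ Z ↔ ∀ i, v i ⬝ᵥ x = 0 := fun x => by
    simp only [Z, LinearMap.mem_ker, funext_iff]; rfl
  have hrange : LinearMap.range L = ⊤ := by
    refine LinearMap.range_eq_top.mpr fun c => ?_
    obtain ⟨z, hz⟩ := hv.linearIndependent.exists_dotProduct_eq c
    exact ⟨z, funext hz⟩
  have hdim : p + finrank K Z = n := by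
    have := L.finrank_range_add_finrank_ker
    rw [hrange, finrank_top] at this
    simpa using this
  have hproj : ∀ x, x - ∑ i, (v i ⬝ᵥ x) • v i ∈ Z := fun x => (hZ _).mpr fun j => by
    simp [dotProduct_sub, dotProduct_sum, dotProduct_smul, hv j]
  have hZnondeg : ∀ x ∈ Z, (∀ y ∈ Z, x ⬝ᵥ y = 0) → x = 0 := by
    intro x hx hxZ
    refine dotProduct_eq_zero x fun y => ?_
    have h1 := hxZ _ (hproj y)
    simpa [dotProduct_sub, dotProduct_sum, dotProduct_smul, dotProduct_comm x (v _),
      (hZ x).mp hx] using h1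
  obtain ⟨c, hc, hcZ⟩ := exists_dotOrthonormal_basis rfl hZnondeg
  have hvc : DotOrthonormal (Fin.append v c) := hv.append hc fun i j =>
    (hZ _).mp (hcZ ▸ subset_span (mem_range_self j)) i
  refine ⟨hdim ▸ Nat.le_add_right _ _, fun i => Fin.append v c (Fin.cast hdim.symm i), ?_, ?_⟩
  · intro i j
    simp [hvc _ _]
  · intro i
    rw [← Fin.append_left v c i]
    rfl

theorem DotOrthonormal.exists_isometry {f : Fin n → Fin n → K} (hf : DotOrthonormal f) :
    ∃ g : (Fin n → K) ≃ₗ[K] (Fin n → K),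
      (∀ x y, g x ⬝ᵥ g y = x ⬝ᵥ y) ∧ ∀ i, g (f i) = Pi.single i 1 := by
  set F := Matrix.of f
  have hF : F * Fᵀ = 1 := Matrix.ext fun i j => by
    rw [Matrix.one_apply, ← hf i j]; rfl
  have hF' : Fᵀ * F = 1 := mul_eq_one_comm.mp hF
  refine ⟨LinearEquiv.ofLinearMap F.mulVecLin Fᵀ.mulVecLin ?_ ?_, fun x y => ?_, fun i => ?_⟩
  · exact LinearMap.ext fun x => by
      simp only [LinearMap.comp_apply, mulVecLin_apply, mulVec_mulVec, hF, one_mulVec,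
        LinearMap.id_apply]
  · exact LinearMap.ext fun x => by
      simp only [LinearMap.comp_apply, mulVecLin_apply, mulVec_mulVec, hF', one_mulVec,
        LinearMap.id_apply]
  · simp [dotProduct_mulVec, ← mulVec_transpose, mulVec_mulVec, hF']
  · ext j
    rw [LinearEquiv.coe_ofLinearMap, mulVecLin_apply, Pi.single_apply, ← hf j i]
    rfl

theorem exists_isotropic_dual [Invertible (2 : K)] {k r : ℕ} {u : Fin k → Fin n → K}
    {w : Fin r → Fin n → K} (hli : LinearIndependent K (Fin.append u w))
    (huw : ∀ i j, u i ⬝ᵥ w j = 0) (hww : ∀ i j, w i ⬝ᵥ w j = 0) :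
    ∃ z : Fin r → Fin n → K, (∀ i j, u i ⬝ᵥ z j = 0) ∧
      (∀ i j, w i ⬝ᵥ z j = if i = j then 1 else 0) ∧ ∀ i j, z i ⬝ᵥ z j = 0 := by
  classical
  choose z' hz' using fun j =>
    hli.exists_dotProduct_eq (Fin.append 0 fun i => if i = j then 1 else 0)
  have huz' : ∀ i j, u i ⬝ᵥ z' j = 0 := fun i j => by
    simpa using hz' j (Fin.castAdd r i)
  have hwz' : ∀ i j, w i ⬝ᵥ z' j = if i = j then 1 else 0 := fun i j => by
    simpa using hz' j (Fin.natAdd k i)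
  have h2 : (2 : K) ≠ 0 := Invertible.ne_zero 2
  -- subtracting half the Gram matrix of `z'` along `w` makes the dual vectors isotropic
  refine ⟨fun j => z' j - ∑ s, (2⁻¹ * z' j ⬝ᵥ z' s) • w s, fun i j => ?_, fun i j => ?_,
    fun i j => ?_⟩
  · simp [dotProduct_sub, dotProduct_sum, dotProduct_smul, huz', huw]
  · simp [dotProduct_sub, dotProduct_sum, dotProduct_smul, hwz', hww]
  · simp [dotProduct_sub, sub_dotProduct, dotProduct_sum, sum_dotProduct, dotProduct_smul,
      smul_dotProduct, hwz', hww, dotProduct_comm (z' _) (w _)]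
    field_simp
    linear_combination dotProduct_comm (z' i) (z' j)

end

section

variable {n : ℕ}

theorem mem_perp {V : Submodule ℂ (Fin n → ℂ)} {w : Fin n → ℂ} :
    w ∈ perp n V ↔ ∀ v ∈ V, v ⬝ᵥ w = 0 := Iff.rfl

theorem exists_dotOrthonormal_append_radical_basis (V : Submodule ℂ (Fin n → ℂ)) {k r : ℕ}
    (hr : finrank ℂ ↥(V ⊓ perp n V) = r) (hV : finrank ℂ V = k + r) :
    ∃ (u : Fin k → Fin n → ℂ) (w : Fin r → Fin n → ℂ), DotOrthonormal u ∧
      (∀ i j, u i ⬝ᵥ w j = 0) ∧ (∀ i j, w i ⬝ᵥ w j = 0) ∧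
      span ℂ (range (Fin.append u w)) = V := by
  set R := V ⊓ perp n V
  obtain ⟨Q, hQ⟩ := R.exists_isCompl
  set U := Q ⊓ V
  have hsup : R ⊔ U = V := by
    rw [← sup_inf_assoc_of_le Q inf_le_left, hQ.sup_eq_top, top_inf_eq]
  have hinf : R ⊓ U = ⊥ := eq_bot_iff.mpr fun x hx => hQ.inf_eq_bot ▸ ⟨hx.1, hx.2.1⟩
  have hU : finrank ℂ U = k := by
    have := finrank_sup_add_finrank_inf_eq R U
    rw [hsup, hinf, finrank_bot, hr, hV] at this
    omega
  have hUnondeg : ∀ x ∈ U, (∀ y ∈ U, x ⬝ᵥ y = 0) → x = 0 := by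
    intro x hx hxU
    have hxR : x ∈ R := ⟨hx.2, fun v hv => ?_⟩
    · exact (Submodule.mem_bot ℂ).mp (hinf ▸ ⟨hxR, hx⟩)
    obtain ⟨y, hy, y', hy', rfl⟩ := mem_sup.mp (hsup ▸ hv)
    change (y + y') ⬝ᵥ x = 0
    rw [add_dotProduct, dotProduct_comm y', hxU y' hy', dotProduct_comm y,
      mem_perp.mp hy.2 x hx.2, add_zero]
  obtain ⟨u, hu, hspan_u⟩ := exists_dotOrthonormal_basis hU hUnondeg
  set bR := Module.finBasisOfFinrankEq ℂ R hr
  have hspan_w : span ℂ (range fun j => (bR j : Fin n → ℂ)) = R := by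
    rw [range_comp', ← R.coe_subtype, span_image, bR.span_eq, map_subtype_top]
  have huV : ∀ i, u i ∈ V := fun i => (hspan_u ▸ subset_span (mem_range_self i) : u i ∈ U).2
  refine ⟨u, fun j => bR j, hu, fun i j => (bR j).2.2 _ (huV i),
    fun i j => (bR j).2.2 _ (bR i).2.1, ?_⟩
  rw [Fin.range_append, span_union, hspan_u, hspan_w, sup_comm, hsup]

theorem dotOrthonormal_append_hyperbolic {k r : ℕ} {u : Fin k → Fin n → ℂ}
    {w z : Fin r → Fin n → ℂ} (hu : DotOrthonormal u) (huw : ∀ i j, u i ⬝ᵥ w j = 0)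
    (huz : ∀ i j, u i ⬝ᵥ z j = 0) (hww : ∀ i j, w i ⬝ᵥ w j = 0)
    (hwz : ∀ i j, w i ⬝ᵥ z j = if i = j then 1 else 0) (hzz : ∀ i j, z i ⬝ᵥ z j = 0) :
    DotOrthonormal (Fin.append u (Fin.append (fun j => (2⁻¹ : ℂ) • w j + z j)
      fun j => Complex.I • (z j - (2⁻¹ : ℂ) • w j))) := by
  have hzw : ∀ i j, z i ⬝ᵥ w j = if i = j then 1 else 0 := fun i j => by
    rw [dotProduct_comm, hwz]
    exact if_congr eq_comm rfl rfl
  refine hu.append (DotOrthonormal.append (fun i j => ?_) (fun i j => ?_) fun i j => ?_)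
    fun i j => ?_
  · simp only [add_dotProduct, dotProduct_add, smul_dotProduct, dotProduct_smul,
      hww, hwz, hzw, hzz]
    split_ifs <;> norm_num
  · simp only [sub_dotProduct, dotProduct_sub, smul_dotProduct, dotProduct_smul,
      hww, hwz, hzw, hzz]
    split_ifs <;> simp
    linear_combination -Complex.I_mul_I
  · simp only [add_dotProduct, dotProduct_sub, smul_dotProduct, dotProduct_smul,
      hww, hwz, hzw, hzz]
    split_ifs <;> simp
  · refine Fin.addCases (fun j => ?_) (fun j => ?_) j
    · simp [Fin.append_left, dotProduct_add, dotProduct_smul, huw, huz]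
    · rw [Fin.append_right]
      simp [dotProduct_sub, dotProduct_smul, huw, huz]

theorem stdVec_eq_single {i : Fin n} {j : ℕ} (h : (i : ℕ) + 1 = j) :
    stdVec n j = Pi.single i 1 := by
  subst h
  funext s
  simp [stdVec, Pi.single_apply, Fin.val_inj]

theorem normalForm_eq_comp_append {k r : ℕ} (hle : k + (r + r) ≤ n)
    (g : (Fin n → ℂ) →ₗ[ℂ] Fin n → ℂ) {u : Fin k → Fin n → ℂ} {a b : Fin r → Fin n → ℂ}
    (hg : ∀ i, g (Fin.append u (Fin.append a b) i) = Pi.single (Fin.castLE hle i) 1) :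
    (fun t : Fin (k + r) => if (t : ℕ) + 1 ≤ k then stdVec n ((t : ℕ) + 1)
      else stdVec n ((t : ℕ) + 1) + Complex.I • stdVec n ((t : ℕ) + 1 + (k + r) - k)) =
      g ∘ Fin.append u fun j => a j + Complex.I • b j := by
  funext t
  cases t using Fin.addCases with
  | left i =>
    have hu := hg (Fin.castAdd _ i)
    rw [Fin.append_left] at hu
    rw [Function.comp_apply, Fin.append_left, hu, if_pos (by simp)]
    exact stdVec_eq_single (by simp)
  | right j =>
    have ha := hg (Fin.natAdd _ (Fin.castAdd _ j))
    have hb := hg (Fin.natAdd _ (Fin.natAdd _ j))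
    rw [Fin.append_right, Fin.append_left] at ha
    rw [Fin.append_right, Fin.append_right] at hb
    rw [Function.comp_apply, Fin.append_right, map_add, map_smul, ha, hb, if_neg (by simp)]
    exact congr_arg₂ (· + Complex.I • ·) (stdVec_eq_single (by simp))
      (stdVec_eq_single (by simp; omega))

end

/-- Normal forms of `m`-planes in `ℂⁿ` under the complex orthogonal group: if
`k` is the rank of the standard bilinear form restricted to `V`, then `2m − k ≤ n`
and some `g ∈ O(n,ℂ)` carries `V` to
`span{e₁, …, e_k, e_{k+1} + i·e_{m+1}, …, e_m + i·e_{2m−k}}`. -/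
theorem stmt3 (n m k : ℕ) (V : Submodule ℂ (Fin n → ℂ))
    (hm : Module.finrank ℂ V = m)
    (hk : k = m - Module.finrank ℂ ↥(V ⊓ perp n V)) :
    2 * m ≤ n + k ∧
    ∃ g : (Fin n → ℂ) ≃ₗ[ℂ] (Fin n → ℂ),
      (∀ x y : Fin n → ℂ, sbilin (g x) (g y) = sbilin x y) ∧
      V.map (g : (Fin n → ℂ) →ₗ[ℂ] (Fin n → ℂ)) =
        Submodule.span ℂ (Set.range fun t : Fin m =>
          if (t : ℕ) + 1 ≤ k then stdVec n ((t : ℕ) + 1)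
          else stdVec n ((t : ℕ) + 1) + Complex.I • stdVec n ((t : ℕ) + 1 + m - k)) := by
  set r := finrank ℂ ↥(V ⊓ perp n V)
  obtain rfl : m = k + r := by
    have := Submodule.finrank_mono (inf_le_left : V ⊓ perp n V ≤ V)
    omega
  obtain ⟨u, w, hu, huw, hww, hV⟩ := exists_dotOrthonormal_append_radical_basis V rfl hm
  have hli : LinearIndependent ℂ (Fin.append u w) := by
    rw [linearIndependent_iff_card_eq_finrank_span, Set.finrank, hV, hm, Fintype.card_fin]
  obtain ⟨z, huz, hwz, hzz⟩ := exists_isotropic_dual hli huw hww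
  obtain ⟨hle, f, hf, hfe⟩ :=
    (dotOrthonormal_append_hyperbolic hu huw huz hww hwz hzz).exists_extension
  obtain ⟨g, hg, hgf⟩ := hf.exists_isometry
  have hw : (fun j => ((2⁻¹ : ℂ) • w j + z j) + Complex.I • Complex.I • (z j - (2⁻¹ : ℂ) • w j))
      = w := funext fun j => by
    rw [smul_smul, Complex.I_mul_I]
    module
  refine ⟨by omega, g, hg, ?_⟩
  rw [← hV, map_span, ← range_comp,
    normalForm_eq_comp_append hle g fun i => by rw [← hfe, LinearEquiv.coe_coe, hgf], hw]

end
end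

section
/- Let V ⊆ ℂⁿ be a subspace with dim V = m such that the restriction of ⟨·,·⟩ to V is degenerate but not identically zero, i.e. 0 < rank(⟨·,·⟩|_V) < m. Then for every subspace W ⊆ ℂⁿ with ℂⁿ = V ⊕ W, the subspace K(V,W) = {a ∈ ℂⁿ : Q_a(v,v') ∈ W for all v, v' ∈ V} has dimension strictly less than n − m. -/
noncomputable section

/-- The 2-jet `Q_a(v,w) = −⟨v,w⟩·a + ⟨a,v⟩·w + ⟨a,w⟩·v` of a global holomorphic
vector field on the hyperquadric vanishing to second order at the reference point. -/
def Qmap {n : ℕ} (a v w : Fin n → ℂ) : Fin n → ℂ :=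
  (-(sbilin v w)) • a + (sbilin a v) • w + (sbilin a w) • v

theorem sbilin_add_left {n : ℕ} (a b v : Fin n → ℂ) :
    sbilin (a + b) v = sbilin a v + sbilin b v := by
  simp [sbilin, Pi.add_apply, add_mul, Finset.sum_add_distrib]

theorem sbilin_smul_left {n : ℕ} (c : ℂ) (a v : Fin n → ℂ) :
    sbilin (c • a) v = c * sbilin a v := by
  simp only [sbilin, Pi.smul_apply, smul_eq_mul, Finset.mul_sum]
  exact Finset.sum_congr rfl fun s _ => by ring

/-- `K(V,W) = {a : Q_a(v,v') ∈ W for all v, v' ∈ V}`. -/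
def Kspace (n : ℕ) (V W : Submodule ℂ (Fin n → ℂ)) : Submodule ℂ (Fin n → ℂ) where
  carrier := {a | ∀ v ∈ V, ∀ v' ∈ V, Qmap a v v' ∈ W}
  zero_mem' := by
    intro v hv v' hv'
    have : Qmap (0 : Fin n → ℂ) v v' = 0 := by simp [Qmap, sbilin]
    rw [this]; exact W.zero_mem
  add_mem' := by
    intro a b ha hb v hv v' hv'
    have : Qmap (a + b) v v' = Qmap a v v' + Qmap b v v' := by
      simp only [Qmap, sbilin_add_left]
      module
    rw [this]; exact W.add_mem (ha v hv v' hv') (hb v hv v' hv')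
  smul_mem' := by
    intro c a ha v hv v' hv'
    have : Qmap (c • a) v v' = c • Qmap a v v' := by
      simp only [Qmap, sbilin_smul_left]
      module
    rw [this]; exact W.smul_mem c (ha v hv v' hv')

end

noncomputable section

theorem sbilin_comm {n : ℕ} (x y : Fin n → ℂ) : sbilin x y = sbilin y x :=
  Finset.sum_congr rfl fun s _ => mul_comm _ _

theorem sbilin_add_right {n : ℕ} (a v w : Fin n → ℂ) :
    sbilin a (v + w) = sbilin a v + sbilin a w := by
  rw [sbilin_comm, sbilin_add_left, sbilin_comm v a, sbilin_comm w a]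

theorem sbilin_eq_zero_of_forall {n : ℕ} (u : Fin n → ℂ)
    (h : ∀ x, sbilin x u = 0) : u = 0 := by
  funext s
  have := h (Pi.single s 1)
  simpa [sbilin, Pi.single_apply] using this

/-- The linear functional `a ↦ ⟨a, u⟩`. -/
def sbilinFun {n : ℕ} (u : Fin n → ℂ) : (Fin n → ℂ) →ₗ[ℂ] ℂ where
  toFun a := sbilin a u
  map_add' a b := sbilin_add_left a b u
  map_smul' c a := sbilin_smul_left c a u

/-- If the standard bilinear form restricted to `V` (with `dim V = m`) is degenerate
but not identically zero, i.e. `0 < rank < m` where `rank = m − dim(V ∩ V^⊥)`, then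
for every complement `W` of `V`, `dim K(V,W) < n − m`. -/
theorem stmt4 (n m : ℕ) (V : Submodule ℂ (Fin n → ℂ))
    (hm : Module.finrank ℂ V = m)
    (hrank_pos : 0 < m - Module.finrank ℂ ↥(V ⊓ perp n V))
    (hrank_lt : m - Module.finrank ℂ ↥(V ⊓ perp n V) < m) :
    ∀ W : Submodule ℂ (Fin n → ℂ), IsCompl V W →
      Module.finrank ℂ ↥(Kspace n V W) < n - m := by
  intro W hcompl
  set d := Module.finrank ℂ ↥(V ⊓ perp n V) with hd
  have hd_pos : 0 < d := by omega
  have hd_lt : d < m := by omega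
  -- a nonzero element u of V ∩ V^⊥
  have hne : V ⊓ perp n V ≠ ⊥ := by
    intro h
    rw [h] at hd
    simp [finrank_bot] at hd
    omega
  obtain ⟨u, huVp, hu0⟩ := Submodule.exists_mem_ne_zero_of_ne_bot hne
  have huV : u ∈ V := huVp.1
  have huP : u ∈ perp n V := huVp.2
  have huu : sbilin u u = 0 := huP u huV
  -- an element v₀ of V with ⟨v₀, v₀⟩ ≠ 0
  have hlt : V ⊓ perp n V < V := by
    refine Submodule.lt_of_le_of_finrank_lt_finrank inf_le_left ?_
    rw [← hd, hm]; exact hd_lt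
  obtain ⟨x, hxV, hxn⟩ := SetLike.exists_of_lt hlt
  have hxP : x ∉ perp n V := fun h => hxn ⟨hxV, h⟩
  have : ∃ y ∈ V, sbilin y x ≠ 0 := by
    by_contra h
    push_neg at h
    exact hxP h
  obtain ⟨y, hyV, hyx⟩ := this
  obtain ⟨v₀, hv₀V, hv₀⟩ : ∃ v₀ ∈ V, sbilin v₀ v₀ ≠ 0 := by
    by_cases hx : sbilin x x = 0
    · by_cases hy : sbilin y y = 0
      · refine ⟨x + y, V.add_mem hxV hyV, ?_⟩
        rw [sbilin_add_left, sbilin_add_right, sbilin_add_right, hx, hy,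
          sbilin_comm x y]
        intro h
        apply hyx
        have : (2 : ℂ) * sbilin y x = 0 := by linear_combination h
        simpa using this
      · exact ⟨y, hyV, hy⟩
    · exact ⟨x, hxV, hx⟩
  have hdisj : ∀ z, z ∈ V → z ∈ W → z = 0 :=
    fun z => Submodule.disjoint_def.mp hcompl.disjoint z
  -- K ⊆ W ⊓ ker (⟨·, u⟩)
  have hKle : Kspace n V W ≤ W ⊓ LinearMap.ker (sbilinFun u) := by
    intro a ha
    have hau : sbilin a u = 0 := by
      have h1 : Qmap a u u ∈ W := ha u huV u huV
      have h2 : Qmap a u u = (2 * sbilin a u) • u := by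
        simp only [Qmap, huu]
        module
      rw [h2] at h1
      have h3 : (2 * sbilin a u) • u = 0 :=
        hdisj _ (V.smul_mem _ huV) h1
      rcases smul_eq_zero.mp h3 with h | h
      · exact (mul_eq_zero.mp h).resolve_left two_ne_zero
      · exact absurd h hu0
    have hav : sbilin a v₀ = 0 := by
      have h1 : Qmap a v₀ u ∈ W := ha v₀ hv₀V u huV
      have hvu : sbilin v₀ u = 0 := huP v₀ hv₀V
      have h2 : Qmap a v₀ u = (sbilin a v₀) • u := by
        simp only [Qmap, hvu, hau]
        module
      rw [h2] at h1
      have h3 : (sbilin a v₀) • u = 0 := hdisj _ (V.smul_mem _ huV) h1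
      rcases smul_eq_zero.mp h3 with h | h
      · exact h
      · exact absurd h hu0
    have haW : a ∈ W := by
      have h1 : Qmap a v₀ v₀ ∈ W := ha v₀ hv₀V v₀ hv₀V
      have h2 : Qmap a v₀ v₀ = (-(sbilin v₀ v₀)) • a := by
        simp only [Qmap, hav]
        module
      rw [h2] at h1
      have := W.smul_mem (-(sbilin v₀ v₀))⁻¹ h1
      rwa [smul_smul, inv_mul_cancel₀ (by simpa using hv₀), one_smul] at this
    exact ⟨haW, by simpa [LinearMap.mem_ker, sbilinFun] using hau⟩
  -- strictness: some w ∈ W has ⟨w, u⟩ ≠ 0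
  have hstrict : W ⊓ LinearMap.ker (sbilinFun u) < W := by
    rw [SetLike.lt_iff_le_and_exists]
    refine ⟨inf_le_left, ?_⟩
    by_contra h
    push_neg at h
    apply hu0
    apply sbilin_eq_zero_of_forall
    intro z
    have hz : z ∈ V ⊔ W := by rw [hcompl.sup_eq_top]; trivial
    obtain ⟨v, hv, w, hw, rfl⟩ := Submodule.mem_sup.mp hz
    have hwu : sbilin w u = 0 := by
      have := (h w hw).2
      simpa [LinearMap.mem_ker, sbilinFun] using this
    rw [sbilin_add_left, huP v hv, hwu, add_zero]
  have hWrank : Module.finrank ℂ ↥W = n - m := by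
    have := Submodule.finrank_add_eq_of_isCompl hcompl
    rw [hm] at this
    simp [Module.finrank_pi] at this
    omega
  calc Module.finrank ℂ ↥(Kspace n V W)
      ≤ Module.finrank ℂ ↥(W ⊓ LinearMap.ker (sbilinFun u)) :=
        Submodule.finrank_mono hKle
    _ < Module.finrank ℂ ↥W := Submodule.finrank_lt_finrank_of_lt hstrict
    _ = n - m := hWrank

end
end

section
/- Let ℓ ≥ 2 and let k be an even integer with 2 ≤ k ≤ ℓ. In ℝ^ℓ, let Δ be the root system of type B_ℓ, let Δ₁ = {e_i − e_j : 1 ≤ i ≤ k < j ≤ ℓ} ∪ {e_i : 1 ≤ i ≤ k} ∪ {e_i + e_j : 1 ≤ i ≤ k < j ≤ ℓ}, and let Ψ₂ = {e_{2s−1} + e_{2s} : 1 ≤ s ≤ k/2}. Then: (i) Ψ₂ is a strongly orthogonal set in Δ, i.e. for any two distinct β, β' ∈ Ψ₂ neither β + β' nor β − β' lies in Δ; and (ii) for every α ∈ Δ₁ there exists exactly one β ∈ Δ₁ such that α + β ∈ Ψ₂. -/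
/-- The `j`-th standard basis vector of `ℝ^ℓ` (1-indexed: `e ℓ 1, …, e ℓ ℓ`). -/
def e (ℓ : ℕ) (j : ℕ) : Fin ℓ → ℝ := fun s => if (s : ℕ) + 1 = j then 1 else 0

/-- The root system of type `B_ℓ`: `{±e_i ± e_j : i < j} ∪ {±e_i}`. -/
def DeltaB (ℓ : ℕ) : Set (Fin ℓ → ℝ) :=
  {v | ∃ i j : ℕ, 1 ≤ i ∧ i < j ∧ j ≤ ℓ ∧
      (v = e ℓ i + e ℓ j ∨ v = e ℓ i - e ℓ j ∨
       v = -e ℓ i + e ℓ j ∨ v = -e ℓ i - e ℓ j)} ∪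
  {v | ∃ i : ℕ, 1 ≤ i ∧ i ≤ ℓ ∧ (v = e ℓ i ∨ v = -e ℓ i)}

/-- Level-one roots of the gradation of `B_ℓ` associated to the simple root `α_k`:
`{e_i − e_j : 1 ≤ i ≤ k < j ≤ ℓ} ∪ {e_i : 1 ≤ i ≤ k} ∪ {e_i + e_j : 1 ≤ i ≤ k < j ≤ ℓ}`. -/
def Delta1B (ℓ k : ℕ) : Set (Fin ℓ → ℝ) :=
  {v | ∃ i j : ℕ, 1 ≤ i ∧ i ≤ k ∧ k < j ∧ j ≤ ℓ ∧ v = e ℓ i - e ℓ j} ∪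
  {v | ∃ i : ℕ, 1 ≤ i ∧ i ≤ k ∧ v = e ℓ i} ∪
  {v | ∃ i j : ℕ, 1 ≤ i ∧ i ≤ k ∧ k < j ∧ j ≤ ℓ ∧ v = e ℓ i + e ℓ j}

/-- `Ψ₂ = {e_{2s−1} + e_{2s} : 1 ≤ s ≤ k/2}`. -/
def Psi2B (ℓ k : ℕ) : Set (Fin ℓ → ℝ) :=
  {v | ∃ s : ℕ, 1 ≤ s ∧ 2 * s ≤ k ∧ v = e ℓ (2 * s - 1) + e ℓ (2 * s)}

/-!
Write `ψ_s = e_{2s-1} + e_{2s}`. Every root of `B_ℓ` has at most two nonzero coordinates,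
while `ψ_s ± ψ_t` (`s ≠ t`) has four; this gives strong orthogonality. Every `α ∈ Δ₁` is
`e_i + γ` with `i ≤ k` and `γ ∈ {0, ±e_j}`, `j > k`; if `{i, i'} = {2s - 1, 2s}`, then
`β = e_{i'} - γ = e_{i'} + e_i - α` lies in `Δ₁` and `α + β = ψ_s`. Elements of `Δ₁` have
nonnegative coordinates at indices `≤ k`, so any `α + β' = ψ_t` with `β' ∈ Δ₁` is positive at `i`,
forcing `t = s` and `β' = β`.
-/

lemma exists_support_of_mem_DeltaB {ℓ : ℕ} {v : Fin ℓ → ℝ} (hv : v ∈ DeltaB ℓ) :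
    ∃ i j : ℕ, ∀ p : Fin ℓ, v p ≠ 0 → (p : ℕ) + 1 = i ∨ (p : ℕ) + 1 = j := by
  rcases hv with ⟨i, j, -, -, -, hv⟩ | ⟨i, -, -, hv⟩
  · refine ⟨i, j, fun p hp => ?_⟩
    by_contra! h
    rcases hv with rfl | rfl | rfl | rfl <;> simp [e, h.1, h.2] at hp
  · refine ⟨i, i, fun p hp => ?_⟩
    by_contra! h
    rcases hv with rfl | rfl <;> simp [e, h.1] at hp

lemma notMem_DeltaB_of_four_ne_zero {ℓ : ℕ} {v : Fin ℓ → ℝ} {a b c d : ℕ}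
    (hdistinct : a ≠ b ∧ a ≠ c ∧ a ≠ d ∧ b ≠ c ∧ b ≠ d ∧ c ≠ d)
    (hv : ∀ x ∈ ({a, b, c, d} : Finset ℕ), ∃ p : Fin ℓ, (p : ℕ) + 1 = x ∧ v p ≠ 0) :
    v ∉ DeltaB ℓ := by
  intro hmem
  obtain ⟨i, j, hij⟩ := exists_support_of_mem_DeltaB hmem
  have hsupp : ∀ x ∈ ({a, b, c, d} : Finset ℕ), x = i ∨ x = j := fun x hx => by
    obtain ⟨p, rfl, hp⟩ := hv x hx
    exact hij p hp
  simp only [Finset.mem_insert, Finset.mem_singleton, forall_eq_or_imp, forall_eq] at hsupp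
  omega

lemma Psi2B_add_smul_notMem_DeltaB {ℓ s t : ℕ} (hs : 1 ≤ s) (ht : 1 ≤ t) (hst : s ≠ t)
    (hsℓ : 2 * s ≤ ℓ) (htℓ : 2 * t ≤ ℓ) {c : ℝ} (hc : c ≠ 0) :
    e ℓ (2 * s - 1) + e ℓ (2 * s) + c • (e ℓ (2 * t - 1) + e ℓ (2 * t)) ∉ DeltaB ℓ := by
  refine notMem_DeltaB_of_four_ne_zero (a := 2 * s - 1) (b := 2 * s) (c := 2 * t - 1)
    (d := 2 * t) (by omega) fun x hx => ?_
  simp only [Finset.mem_insert, Finset.mem_singleton] at hx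
  refine ⟨⟨x - 1, by omega⟩, by simp only; omega, ?_⟩
  simp only [e, Pi.add_apply, Pi.smul_apply, smul_eq_mul]
  split_ifs <;> first | omega | simp [hc]

lemma nonneg_of_mem_Delta1B {ℓ k : ℕ} {v : Fin ℓ → ℝ} (hv : v ∈ Delta1B ℓ k) (p : Fin ℓ)
    (hp : (p : ℕ) < k) : 0 ≤ v p := by
  rcases hv with (⟨i, j, -, -, hkj, -, rfl⟩ | ⟨i, -, -, rfl⟩) | ⟨i, j, -, -, -, -, rfl⟩ <;>
    simp only [e, Pi.add_apply, Pi.sub_apply] <;> split_ifs <;> first | omega | norm_num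

lemma exists_swap_mem_Delta1B {ℓ k : ℕ} (hkℓ : k ≤ ℓ) {α : Fin ℓ → ℝ}
    (hα : α ∈ Delta1B ℓ k) :
    ∃ p : Fin ℓ, (p : ℕ) < k ∧ α p = 1 ∧
      ∀ i, 1 ≤ i → i ≤ k → e ℓ i + e ℓ ((p : ℕ) + 1) - α ∈ Delta1B ℓ k := by
  rcases hα with (⟨i, j, hi, hik, hkj, hjℓ, rfl⟩ | ⟨i, hi, hik, rfl⟩) |
      ⟨i, j, hi, hik, hkj, hjℓ, rfl⟩ <;>
    refine ⟨⟨i - 1, by omega⟩, (by simp only; omega),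
      (by simp only [e, Pi.add_apply, Pi.sub_apply]; split_ifs <;> first | omega | norm_num),
      fun i' hi' hi'k => ?_⟩ <;>
    rw [Nat.sub_add_cancel hi]
  · exact Or.inr ⟨i', j, hi', hi'k, hkj, hjℓ, by abel⟩
  · exact Or.inl (Or.inr ⟨i', hi', hi'k, by abel⟩)
  · exact Or.inl (Or.inl ⟨i', j, hi', hi'k, hkj, hjℓ, by abel⟩)

lemma exists_mate_of_even {k i : ℕ} (hk : Even k) (hi : 1 ≤ i) (hik : i ≤ k) (ℓ : ℕ) :
    ∃ s i', 1 ≤ s ∧ 2 * s ≤ k ∧ 1 ≤ i' ∧ i' ≤ k ∧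
      e ℓ i' + e ℓ i = e ℓ (2 * s - 1) + e ℓ (2 * s) := by
  obtain ⟨m, rfl⟩ := hk
  rcases Nat.even_or_odd i with ⟨a, rfl⟩ | ⟨a, rfl⟩
  · exact ⟨a, a + a - 1, by omega, by omega, by omega, by omega, by rw [two_mul]⟩
  · refine ⟨a + 1, 2 * a + 2, by omega, by omega, by omega, by omega, ?_⟩
    rw [add_comm, show 2 * (a + 1) - 1 = 2 * a + 1 by omega, mul_add_one]

lemma Psi2B_index_eq {ℓ t : ℕ} {p : Fin ℓ} (hp : (e ℓ (2 * t - 1) + e ℓ (2 * t)) p ≠ 0) :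
    t = ((p : ℕ) + 2) / 2 := by
  by_contra! h
  simp only [e, Pi.add_apply] at hp
  split_ifs at hp <;> first | omega | norm_num at hp

lemma Psi2B_index_eq_of_add {ℓ k t : ℕ} {α y : Fin ℓ → ℝ} {p : Fin ℓ} (hpk : (p : ℕ) < k)
    (hαp : α p = 1) (hy : y ∈ Delta1B ℓ k)
    (hsum : α + y = e ℓ (2 * t - 1) + e ℓ (2 * t)) : t = ((p : ℕ) + 2) / 2 := by
  refine Psi2B_index_eq ?_
  rw [← hsum, Pi.add_apply, hαp]
  linarith [nonneg_of_mem_Delta1B hy p hpk]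

theorem existsUnique_add_mem_Psi2B {ℓ k : ℕ} (hkℓ : k ≤ ℓ) (hk : Even k) {α : Fin ℓ → ℝ}
    (hα : α ∈ Delta1B ℓ k) : ∃! β, β ∈ Delta1B ℓ k ∧ α + β ∈ Psi2B ℓ k := by
  obtain ⟨p, hpk, hαp, hswap⟩ := exists_swap_mem_Delta1B hkℓ hα
  obtain ⟨s, i, hs, hsk, hi, hik, hmate⟩ := exists_mate_of_even hk (by omega) hpk ℓ
  have hsum : α + (e ℓ i + e ℓ ((p : ℕ) + 1) - α) = e ℓ (2 * s - 1) + e ℓ (2 * s) := by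
    rw [add_sub_cancel, hmate]
  refine ⟨_, ⟨hswap i hi hik, s, hs, hsk, hsum⟩, ?_⟩
  rintro y ⟨hy, t, -, -, hyt⟩
  obtain rfl : t = s := (Psi2B_index_eq_of_add hpk hαp hy hyt).trans
    (Psi2B_index_eq_of_add hpk hαp (hswap i hi hik) hsum).symm
  exact add_left_cancel (hyt.trans hsum.symm)

theorem stmt9_general (ℓ k : ℕ) (hkℓ : k ≤ ℓ) (hkeven : Even k) :
    (∀ β ∈ Psi2B ℓ k, ∀ β' ∈ Psi2B ℓ k, β ≠ β' →
      β + β' ∉ DeltaB ℓ ∧ β - β' ∉ DeltaB ℓ) ∧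
    (∀ α ∈ Delta1B ℓ k, ∃! β, β ∈ Delta1B ℓ k ∧ α + β ∈ Psi2B ℓ k) := by
  refine ⟨?_, fun α hα => existsUnique_add_mem_Psi2B hkℓ hkeven hα⟩
  rintro _ ⟨s, hs, hsk, rfl⟩ _ ⟨t, ht, htk, rfl⟩ hne
  have hst : s ≠ t := by rintro rfl; exact hne rfl
  have hsℓ : 2 * s ≤ ℓ := hsk.trans hkℓ
  have htℓ : 2 * t ≤ ℓ := htk.trans hkℓ
  constructor
  · simpa only [one_smul] using
      Psi2B_add_smul_notMem_DeltaB hs ht hst hsℓ htℓ one_ne_zero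
  · simpa only [neg_one_smul, ← sub_eq_add_neg] using
      Psi2B_add_smul_notMem_DeltaB hs ht hst hsℓ htℓ (neg_ne_zero.2 one_ne_zero)

/-- Type `B_ℓ`, `k` even: `Ψ₂` is strongly orthogonal in `Δ`, and every root `α ∈ Δ₁`
has exactly one pairing `β ∈ Δ₁` with `α + β ∈ Ψ₂`. -/
theorem stmt9 (ℓ k : ℕ) (hℓ : 2 ≤ ℓ) (hk2 : 2 ≤ k) (hkℓ : k ≤ ℓ) (hkeven : Even k) :
    (∀ β ∈ Psi2B ℓ k, ∀ β' ∈ Psi2B ℓ k, β ≠ β' →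
      β + β' ∉ DeltaB ℓ ∧ β - β' ∉ DeltaB ℓ) ∧
    (∀ α ∈ Delta1B ℓ k, ∃! β, β ∈ Delta1B ℓ k ∧ α + β ∈ Psi2B ℓ k) :=
  stmt9_general ℓ k hkℓ hkeven
end

section
/- Let ℓ ≥ 3 and let k be an odd integer with 3 ≤ k ≤ ℓ. In ℝ^ℓ, let Δ be the root system of type B_ℓ, let Δ₁ = {e_i − e_j : 1 ≤ i ≤ k < j ≤ ℓ} ∪ {e_i : 1 ≤ i ≤ k} ∪ {e_i + e_j : 1 ≤ i ≤ k < j ≤ ℓ}, and let Ψ₂ = {e_{2s−1} + e_{2s} : 1 ≤ s ≤ (k−1)/2}. Then: (i) Ψ₂ is a strongly orthogonal set in Δ; (ii) for every α ∈ Δ₁ there exists at most one β ∈ Δ₁ such that α + β ∈ Ψ₂; and (iii) for α equal to e_k, or to e_k − e_j or e_k + e_j with k < j ≤ ℓ, there exists no β ∈ Δ₁ with α + β ∈ Ψ₂. -/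
/-- `Ψ₂ = {e_{2s−1} + e_{2s} : 1 ≤ s ≤ (k−1)/2}` (for `k` odd). -/
def Psi2Bodd (ℓ k : ℕ) : Set (Fin ℓ → ℝ) :=
  {v | ∃ s : ℕ, 1 ≤ s ∧ 2 * s ≤ k - 1 ∧ v = e ℓ (2 * s - 1) + e ℓ (2 * s)}

lemma pick4 (a b c i j : ℕ) (hab : a ≠ b) (hca : c ≠ a) (hcb : c ≠ b) :
    ∃ m, (m = a ∨ m = b ∨ m = c) ∧ m ≠ i ∧ m ≠ j := by
  by_cases ha : a ≠ i ∧ a ≠ j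
  · exact ⟨a, Or.inl rfl, ha.1, ha.2⟩
  by_cases hb : b ≠ i ∧ b ≠ j
  · exact ⟨b, Or.inr (Or.inl rfl), hb.1, hb.2⟩
  push_neg at ha hb
  exact ⟨c, Or.inr (Or.inr rfl), by omega, by omega⟩

lemma four_support {ℓ : ℕ} (K a b c i j : ℕ) (f : Fin ℓ → ℝ)
    (hab : a ≠ b) (hca : c ≠ a) (hcb : c ≠ b)
    (h1a : 1 ≤ a) (h1b : 1 ≤ b) (h1c : 1 ≤ c)
    (haK : a ≤ K) (hbK : b ≤ K) (hcK : c ≤ K) (hKl : K ≤ ℓ)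
    (hsupp : ∀ p : Fin ℓ, (p : ℕ) + 1 ≤ K → (p : ℕ) + 1 ≠ i → (p : ℕ) + 1 ≠ j → f p = 0)
    (hval : ∀ p : Fin ℓ, ((p : ℕ) + 1 = a ∨ (p : ℕ) + 1 = b ∨ (p : ℕ) + 1 = c) → f p ≠ 0) :
    False := by
  obtain ⟨m, hmem, hmi, hmj⟩ := pick4 a b c i j hab hca hcb
  have hlt : m - 1 < ℓ := by omega
  have hp : ((⟨m - 1, hlt⟩ : Fin ℓ) : ℕ) = m - 1 := rfl
  have h0 := hsupp ⟨m - 1, hlt⟩ (by omega) (by omega) (by omega)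
  exact hval ⟨m - 1, hlt⟩ (by omega) h0

lemma deltaB_support {ℓ : ℕ} {v : Fin ℓ → ℝ} (hv : v ∈ DeltaB ℓ) :
    ∃ i j : ℕ, ∀ p : Fin ℓ, (p : ℕ) + 1 ≠ i → (p : ℕ) + 1 ≠ j → v p = 0 := by
  simp only [DeltaB, Set.mem_union, Set.mem_setOf_eq] at hv
  rcases hv with ⟨i, j, hi1, hij, hjl, rfl | rfl | rfl | rfl⟩ | ⟨i, hi1, hil, rfl | rfl⟩
  · exact ⟨i, j, fun p hpi hpj => by simp [e, Pi.add_apply, hpi, hpj]⟩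
  · exact ⟨i, j, fun p hpi hpj => by simp [e, Pi.sub_apply, hpi, hpj]⟩
  · exact ⟨i, j, fun p hpi hpj => by simp [e, Pi.add_apply, Pi.neg_apply, hpi, hpj]⟩
  · exact ⟨i, j, fun p hpi hpj => by simp [e, Pi.sub_apply, Pi.neg_apply, hpi, hpj]⟩
  · exact ⟨i, i, fun p hpi _ => by simp [e, hpi]⟩
  · exact ⟨i, i, fun p hpi _ => by simp [e, Pi.neg_apply, hpi]⟩

lemma delta1_struct {ℓ k : ℕ} {β : Fin ℓ → ℝ} (hβ : β ∈ Delta1B ℓ k) :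
    ∃ i, 1 ≤ i ∧ i ≤ k ∧
      ∀ p : Fin ℓ, (p : ℕ) + 1 ≤ k → β p = if (p : ℕ) + 1 = i then 1 else 0 := by
  simp only [Delta1B, Set.mem_union, Set.mem_setOf_eq] at hβ
  rcases hβ with (⟨i, j, hi1, hik, hkj, hjl, rfl⟩ | ⟨i, hi1, hik, rfl⟩) |
    ⟨i, j, hi1, hik, hkj, hjl, rfl⟩
  · refine ⟨i, hi1, hik, fun p hp => ?_⟩
    simp only [Pi.sub_apply, e]
    rw [if_neg (show ¬((p : ℕ) + 1 = j) by omega), sub_zero]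
  · exact ⟨i, hi1, hik, fun p _ => rfl⟩
  · refine ⟨i, hi1, hik, fun p hp => ?_⟩
    simp only [Pi.add_apply, e]
    rw [if_neg (show ¬((p : ℕ) + 1 = j) by omega), add_zero]

/-- Type `B_ℓ`, `k` odd: `Ψ₂` is strongly orthogonal in `Δ`; every `α ∈ Δ₁` has at
most one pairing `β ∈ Δ₁` with `α + β ∈ Ψ₂`; and `e_k`, `e_k ± e_j` (`k < j ≤ ℓ`)
have no pairing. -/
theorem stmt10 (ℓ k : ℕ) (hℓ : 3 ≤ ℓ) (hk3 : 3 ≤ k) (hkℓ : k ≤ ℓ) (hkodd : Odd k) :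
    (∀ β ∈ Psi2Bodd ℓ k, ∀ β' ∈ Psi2Bodd ℓ k, β ≠ β' →
      β + β' ∉ DeltaB ℓ ∧ β - β' ∉ DeltaB ℓ) ∧
    (∀ α ∈ Delta1B ℓ k, ∀ β ∈ Delta1B ℓ k, ∀ β' ∈ Delta1B ℓ k,
      α + β ∈ Psi2Bodd ℓ k → α + β' ∈ Psi2Bodd ℓ k → β = β') ∧
    (∀ α : Fin ℓ → ℝ,
      (α = e ℓ k ∨ ∃ j : ℕ, k < j ∧ j ≤ ℓ ∧ (α = e ℓ k - e ℓ j ∨ α = e ℓ k + e ℓ j)) →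
      ¬∃ β ∈ Delta1B ℓ k, α + β ∈ Psi2Bodd ℓ k) := by
  refine ⟨?_, ?_, ?_⟩
  · -- Part (i)
    intro β hβ β' hβ' hne
    simp only [Psi2Bodd, Set.mem_setOf_eq] at hβ hβ'
    obtain ⟨s, hs1, hs2, rfl⟩ := hβ
    obtain ⟨t, ht1, ht2, rfl⟩ := hβ'
    have hst : s ≠ t := fun h => hne (by rw [h])
    constructor
    · intro hmem
      obtain ⟨i, j, hij⟩ := deltaB_support hmem
      refine four_support ℓ (2 * s - 1) (2 * s) (2 * t - 1) i j _
        (by omega) (by omega) (by omega) (by omega) (by omega) (by omega)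
        (by omega) (by omega) (by omega) (le_refl ℓ)
        (fun p _ hpi hpj => hij p hpi hpj) ?_
      intro p hp
      simp only [Pi.add_apply, e]
      rcases hp with h | h | h
      · rw [if_pos h, if_neg (by omega), if_neg (by omega), if_neg (by omega)]; norm_num
      · rw [if_neg (by omega), if_pos h, if_neg (by omega), if_neg (by omega)]; norm_num
      · rw [if_neg (by omega), if_neg (by omega), if_pos h, if_neg (by omega)]; norm_num
    · intro hmem
      obtain ⟨i, j, hij⟩ := deltaB_support hmem
      refine four_support ℓ (2 * s - 1) (2 * s) (2 * t - 1) i j _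
        (by omega) (by omega) (by omega) (by omega) (by omega) (by omega)
        (by omega) (by omega) (by omega) (le_refl ℓ)
        (fun p _ hpi hpj => hij p hpi hpj) ?_
      intro p hp
      simp only [Pi.sub_apply, Pi.add_apply, e]
      rcases hp with h | h | h
      · rw [if_pos h, if_neg (by omega), if_neg (by omega), if_neg (by omega)]; norm_num
      · rw [if_neg (by omega), if_pos h, if_neg (by omega), if_neg (by omega)]; norm_num
      · rw [if_neg (by omega), if_neg (by omega), if_pos h, if_neg (by omega)]; norm_num
  · -- Part (ii)
    intro α hα β hβ β' hβ' h1 h2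
    obtain ⟨i, hi1, hik, hβf⟩ := delta1_struct hβ
    obtain ⟨i', hi'1, hi'k, hβ'f⟩ := delta1_struct hβ'
    simp only [Psi2Bodd, Set.mem_setOf_eq] at h1 h2
    obtain ⟨s, hs1, hs2, h1eq⟩ := h1
    obtain ⟨t, ht1, ht2, h2eq⟩ := h2
    by_cases hst : s = t
    · subst hst
      have : α + β = α + β' := by rw [h1eq, h2eq]
      exact add_left_cancel this
    · exfalso
      have hfeq : β - β' =
          e ℓ (2 * s - 1) + e ℓ (2 * s) - (e ℓ (2 * t - 1) + e ℓ (2 * t)) := by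
        rw [← h1eq, ← h2eq]; ring
      refine four_support k (2 * s - 1) (2 * s) (2 * t - 1) i i' (β - β')
        (by omega) (by omega) (by omega) (by omega) (by omega) (by omega)
        (by omega) (by omega) (by omega) hkℓ ?_ ?_
      · intro p hpk hpi hpi'
        simp only [Pi.sub_apply, hβf p hpk, hβ'f p hpk, if_neg hpi, if_neg hpi', sub_zero]
      · intro p hp
        rw [hfeq]
        simp only [Pi.sub_apply, Pi.add_apply, e]
        rcases hp with h | h | h
        · rw [if_pos h, if_neg (by omega), if_neg (by omega), if_neg (by omega)]; norm_num
        · rw [if_neg (by omega), if_pos h, if_neg (by omega), if_neg (by omega)]; norm_num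
        · rw [if_neg (by omega), if_neg (by omega), if_pos h, if_neg (by omega)]; norm_num
  · -- Part (iii)
    rintro α hα ⟨β, hβ, hsum⟩
    obtain ⟨i, hi1, hik, hβf⟩ := delta1_struct hβ
    simp only [Psi2Bodd, Set.mem_setOf_eq] at hsum
    obtain ⟨s, hs1, hs2, hψeq⟩ := hsum
    have hlt : k - 1 < ℓ := by omega
    set p : Fin ℓ := ⟨k - 1, hlt⟩ with hpdef
    have hp : (p : ℕ) = k - 1 := rfl
    have hc := congrFun hψeq p
    simp only [Pi.add_apply, e] at hc
    rw [if_neg (show ¬((p : ℕ) + 1 = 2 * s - 1) by omega),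
        if_neg (show ¬((p : ℕ) + 1 = 2 * s) by omega), add_zero] at hc
    have hβv : β p = if (p : ℕ) + 1 = i then 1 else 0 := hβf p (by omega)
    have hβ0 : (0 : ℝ) ≤ β p := by rw [hβv]; split_ifs <;> norm_num
    have hα1 : α p = 1 := by
      rcases hα with rfl | ⟨j, hkj, hjl, rfl | rfl⟩
      · simp only [e]
        rw [if_pos (show (p : ℕ) + 1 = k by omega)]
      · simp only [Pi.sub_apply, e]
        rw [if_pos (show (p : ℕ) + 1 = k by omega),
            if_neg (show ¬((p : ℕ) + 1 = j) by omega), sub_zero]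
      · simp only [Pi.add_apply, e]
        rw [if_pos (show (p : ℕ) + 1 = k by omega),
            if_neg (show ¬((p : ℕ) + 1 = j) by omega), add_zero]
    rw [hα1] at hc
    linarith
end
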